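/- An instantaneous retrograde (anti-velocity) impulse on a circular orbit strictly decreases the periapsis radius: if r · v = 0, ‖r‖ = a, ‖v‖² = μ_E/a, and v⁺ = (1 − ε) v with 0 < ε < 1, then the periapsis radius of the state (r, v⁺) is strictly less than a. -/

import Mathlib

open scoped RealInnerProductSpace

noncomputable section

/-- Cross product on 3-dimensional Euclidean space. -/
def ecross (a b : EuclideanSpace ℝ (Fin 3)) : EuclideanSpace ℝ (Fin 3) :=
  (WithLp.equiv 2 (Fin 3 → ℝ)).symm
    ![a 1 * b 2 - a 2 * b 1, a 2 * b 0 - a 0 * b 2, a 0 * b 1 - a 1 * b 0]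

/-- Eccentricity vector of the state (r, w). -/
def eccVec (μE : ℝ) (r w : EuclideanSpace ℝ (Fin 3)) : EuclideanSpace ℝ (Fin 3) :=
  (μE)⁻¹ • ecross w (ecross r w) - ‖r‖⁻¹ • r

/-- Periapsis radius of the state (r, w). -/
def periapsis (μE : ℝ) (r w : EuclideanSpace ℝ (Fin 3)) : ℝ :=
  ‖ecross r w‖ ^ 2 / (μE * (1 + ‖eccVec μE r w‖))

/-- A retrograde impulse on a circular orbit strictly decreases the periapsis radius. -/
theorem retrograde_impulse_lowers_periapsis
    (μE a ε : ℝ) (hμE : 0 < μE) (ha : 0 < a) (hε : 0 < ε) (hε1 : ε < 1)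
    (r v : EuclideanSpace ℝ (Fin 3)) (hr : r ≠ 0) (hv : v ≠ 0)
    (hperp : inner ℝ r v = (0 : ℝ)) (hra : ‖r‖ = a) (hva : ‖v‖ ^ 2 = μE / a) :
    periapsis μE r ((1 - ε) • v) < a := by
  set w : EuclideanSpace ℝ (Fin 3) := (1 - ε) • v with hw
  have hrv : r 0 * v 0 + r 1 * v 1 + r 2 * v 2 = 0 := by
    rw [← hperp]; simp [PiLp.inner_apply, Fin.sum_univ_three, mul_comm]
  have hr2 : r 0 ^ 2 + r 1 ^ 2 + r 2 ^ 2 = a ^ 2 := by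
    rw [← hra, ← real_inner_self_eq_norm_sq]
    simp only [PiLp.inner_apply, Fin.sum_univ_three, RCLike.inner_apply, conj_trivial, sq]
  have hv2 : v 0 ^ 2 + v 1 ^ 2 + v 2 ^ 2 = μE / a := by
    rw [← hva, ← real_inner_self_eq_norm_sq]
    simp only [PiLp.inner_apply, Fin.sum_univ_three, RCLike.inner_apply, conj_trivial, sq]
  have hwc : ∀ i, w i = (1 - ε) * v i := by intro i; simp [hw]
  -- the double cross product
  have hbac : ecross w (ecross r w) = ((1 - ε) ^ 2 * (μE / a)) • r := by
    apply PiLp.ext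
    intro i
    rw [← hv2]
    fin_cases i <;> simp [ecross, hwc]
    · linear_combination (-(1 - ε) ^ 2 * v 0) * hrv
    · linear_combination (-(1 - ε) ^ 2 * v 1) * hrv
    · linear_combination (-(1 - ε) ^ 2 * v 2) * hrv
  have hecc : eccVec μE r w = (((1 - ε) ^ 2 - 1) / a) • r := by
    rw [eccVec, hbac, hra, smul_smul]
    rw [← sub_smul]
    congr 1
    field_simp
  have hanorm : ‖eccVec μE r w‖ = 1 - (1 - ε) ^ 2 := by
    rw [hecc, norm_smul, hra, Real.norm_eq_abs]
    have h1 : (1 - ε) ^ 2 < 1 := by nlinarith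
    rw [abs_of_nonpos (by apply div_nonpos_of_nonpos_of_nonneg <;> nlinarith)]
    field_simp
    ring
  have hnorm2 : ‖ecross r w‖ ^ 2 = (1 - ε) ^ 2 * (a * μE) := by
    rw [← real_inner_self_eq_norm_sq]
    simp only [PiLp.inner_apply, Fin.sum_univ_three, RCLike.inner_apply, conj_trivial,
      ecross, WithLp.equiv_symm_apply, PiLp.toLp_apply, Matrix.cons_val_zero, Matrix.cons_val_one,
      Matrix.head_cons, Matrix.cons_val_two, Matrix.tail_cons, hwc]
    have key : (r 1 * ((1-ε) * v 2) - r 2 * ((1-ε) * v 1)) ^ 2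
        + (r 2 * ((1-ε) * v 0) - r 0 * ((1-ε) * v 2)) ^ 2
        + (r 0 * ((1-ε) * v 1) - r 1 * ((1-ε) * v 0)) ^ 2
        = (1-ε)^2 * ((r 0^2 + r 1^2 + r 2^2) * (v 0^2 + v 1^2 + v 2^2)
          - (r 0 * v 0 + r 1 * v 1 + r 2 * v 2)^2) := by ring
    rw [show ∀ x y z : ℝ, x * x + y * y + z * z = x^2 + y^2 + z^2 by intros; ring] at *
    rw [key, hrv, hr2, hv2]
    field_simp
    ring
  rw [periapsis, hnorm2, hanorm]
  have h2ε : (0:ℝ) < 2 - ε := by linarith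
  have hden : 0 < μE * (1 + (1 - (1 - ε) ^ 2)) := by
    nlinarith [mul_pos hμE (mul_pos hε h2ε)]
  rw [div_lt_iff₀ hden]
  nlinarith [mul_pos (mul_pos ha hμE) (mul_pos hε h2ε)]
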